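/- Let p > 1, N > 2α, and set ρ_k implicitly by c₂ k^{p-1} |log(ρ_k/2)| = (c₁/2) ρ_k^{-N+2α} with ρ_k ∈ (0,1). Then ρ_k → 0 as k → ∞, and for ρ_k/2 ≤ |x| ≤ ρ_k one has k ≥ c₃ |x|^{-(N-2α)/(p-1)} / (1+|log|x||)^{1/(p-1)} for some c₃ > 0 independent of k; consequently (c₁/2) k |x|^{-N+2α} ≥ c₄ |x|^{-p(N-2α)/(p-1)} / (1+|log|x||)^{1/(p-1)}. -/
import Mathlib


open Real Filter

theorem stmt_14 (N : ℕ) (hN : 2 ≤ N) (α p c₁ c₂ : ℝ)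
    (hα0 : 0 < α) (hα1 : α < 1) (hN2α : 2 * α < (N : ℝ))
    (hp : p = 2 * α / (N - 2 * α)) (hp1 : 1 < p)
    (hc₁ : 0 < c₁) (hc₂ : 0 < c₂)
    (ρ : ℝ → ℝ)
    (hρ : ∀ k : ℝ, 1 ≤ k → ρ k ∈ Set.Ioo (0 : ℝ) 1 ∧
      c₂ * k ^ (p - 1) * |Real.log (ρ k / 2)| = (c₁ / 2) * (ρ k) ^ (-(N : ℝ) + 2 * α)) :
    Tendsto ρ atTop (nhds 0) ∧
    ∃ c₃ > (0 : ℝ), ∃ c₄ > (0 : ℝ), ∃ k₀ : ℝ, ∀ k ≥ k₀, ∀ x : EuclideanSpace ℝ (Fin N),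
      ρ k / 2 ≤ ‖x‖ → ‖x‖ ≤ ρ k →
        k ≥ c₃ * ‖x‖ ^ (-(N - 2 * α) / (p - 1)) / (1 + |Real.log ‖x‖|) ^ (1 / (p - 1)) ∧
        (c₁ / 2) * k * ‖x‖ ^ (-(N : ℝ) + 2 * α) ≥
          c₄ * ‖x‖ ^ (-(p * (N - 2 * α)) / (p - 1)) / (1 + |Real.log ‖x‖|) ^ (1 / (p - 1)) := by
  have hβ : 0 < (N : ℝ) - 2 * α := by linarith
  set β : ℝ := (N : ℝ) - 2 * α with hβdef
  have hexp : -(N : ℝ) + 2 * α = -β := by rw [hβdef]; ring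
  have hq : 0 < p - 1 := by linarith
  have hqne : p - 1 ≠ 0 := ne_of_gt hq
  -- basic facts for k ≥ 1
  have key : ∀ k : ℝ, 1 ≤ k → 0 < ρ k ∧ ρ k < 1 ∧
      Real.log 2 ≤ |Real.log (ρ k / 2)| ∧
      c₂ * k ^ (p - 1) * |Real.log (ρ k / 2)| = (c₁ / 2) * (ρ k) ^ (-β) ∧
      |Real.log (ρ k / 2)| = Real.log 2 - Real.log (ρ k) := by
    intro k hk
    obtain ⟨⟨h0, h1⟩, heq⟩ := hρ k hk
    have hlogρ : Real.log (ρ k) < 0 := Real.log_neg h0 h1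
    have hld : Real.log (ρ k / 2) = Real.log (ρ k) - Real.log 2 :=
      Real.log_div (ne_of_gt h0) two_ne_zero
    have hlneg : Real.log (ρ k / 2) < 0 := by
      rw [hld]; have := Real.log_pos (by norm_num : (1:ℝ) < 2); linarith
    have habs : |Real.log (ρ k / 2)| = Real.log 2 - Real.log (ρ k) := by
      rw [abs_of_neg hlneg, hld]; ring
    refine ⟨h0, h1, ?_, ?_, habs⟩
    · rw [habs]; linarith
    · rw [← hexp]; exact heq
  constructor
  · -- tendsto
    rw [Metric.tendsto_atTop]
    intro ε hε
    rcases le_or_gt 1 ε with hε1 | hε1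
    · refine ⟨1, fun k hk => ?_⟩
      obtain ⟨h0, h1, _⟩ := key k hk
      rw [Real.dist_eq, sub_zero, abs_of_pos h0]; linarith
    · set M : ℝ := ((c₁ / 2) * ε ^ (-β) / (c₂ * Real.log 2)) ^ (p - 1)⁻¹ with hM
      refine ⟨max 1 (M + 1), fun k hk => ?_⟩
      have hk1 : 1 ≤ k := le_trans (le_max_left _ _) hk
      have hkM : M + 1 ≤ k := le_trans (le_max_right _ _) hk
      obtain ⟨h0, h1, hL2, heq, habs⟩ := key k hk1
      rw [Real.dist_eq, sub_zero, abs_of_pos h0]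
      by_contra hcon
      push_neg at hcon
      have hρε : ε ^ (-β) ≥ (ρ k) ^ (-β) :=
        Real.rpow_le_rpow_of_nonpos hε hcon (by linarith)
      have hlog2 : (0:ℝ) < Real.log 2 := Real.log_pos (by norm_num)
      have hkp : 0 ≤ k ^ (p - 1) := Real.rpow_nonneg (by linarith) _
      have h2 : c₂ * k ^ (p - 1) * Real.log 2 ≤ (c₁ / 2) * ε ^ (-β) := by
        calc c₂ * k ^ (p - 1) * Real.log 2 ≤ c₂ * k ^ (p - 1) * |Real.log (ρ k / 2)| := by
              apply mul_le_mul_of_nonneg_left hL2 (by positivity)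
          _ = (c₁ / 2) * (ρ k) ^ (-β) := heq
          _ ≤ (c₁ / 2) * ε ^ (-β) := by nlinarith
      have h3 : k ^ (p - 1) ≤ (c₁ / 2) * ε ^ (-β) / (c₂ * Real.log 2) := by
        rw [le_div_iff₀ (by positivity)]
        nlinarith
      have h4 : k ≤ M := by
        have := Real.rpow_le_rpow hkp h3 (by positivity : (0:ℝ) ≤ (p-1)⁻¹)
        rwa [Real.rpow_rpow_inv (by linarith) hqne] at this
      linarith
  · -- main estimate
    set D : ℝ := c₁ / 2 * (2:ℝ) ^ (-β) / c₂ with hD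
    have hDpos : 0 < D := by positivity
    refine ⟨D ^ (p - 1)⁻¹, Real.rpow_pos_of_pos hDpos _,
      (c₁ / 2) * D ^ (p - 1)⁻¹, by positivity, 1, fun k hk x hx1 hx2 => ?_⟩
    obtain ⟨h0, h1, hL2, heq, habs⟩ := key k hk
    set r : ℝ := ‖x‖ with hr
    have hr0 : 0 < r := lt_of_lt_of_le (by linarith) hx1
    have hr1 : r < 1 := lt_of_le_of_lt hx2 h1
    have hlogr : Real.log r < 0 := Real.log_neg hr0 hr1
    have h1r : 0 < 1 + |Real.log r| := by positivity
    have hlog2 : (0:ℝ) < Real.log 2 := Real.log_pos (by norm_num)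
    have hLub : |Real.log (ρ k / 2)| ≤ 1 + |Real.log r| := by
      rw [habs]
      have h2le : Real.log 2 ≤ 1 := by
        have := Real.log_le_sub_one_of_pos (by norm_num : (0:ℝ) < 2); linarith
      have : Real.log r ≤ Real.log (ρ k) := Real.log_le_log hr0 hx2
      have : -Real.log (ρ k) ≤ |Real.log r| := le_trans (by linarith) (neg_le_abs _)
      linarith
    -- rewrite equation as formula for k^(p-1)
    have hLpos : 0 < |Real.log (ρ k / 2)| := lt_of_lt_of_le hlog2 hL2
    have hkp : k ^ (p - 1) = (c₁ / 2) * (ρ k) ^ (-β) / (c₂ * |Real.log (ρ k / 2)|) := by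
      rw [eq_div_iff (by positivity)]
      linarith [heq]
    -- lower bound for k^(p-1)
    have hnum : c₁ / 2 * ((2:ℝ) ^ (-β) * r ^ (-β)) ≤ c₁ / 2 * (ρ k) ^ (-β) := by
      apply mul_le_mul_of_nonneg_left _ (by positivity)
      rw [← Real.mul_rpow (by norm_num) (le_of_lt hr0)]
      exact Real.rpow_le_rpow_of_nonpos h0 (by linarith) (by linarith)
    have hB : c₁ / 2 * ((2:ℝ) ^ (-β) * r ^ (-β)) / (c₂ * (1 + |Real.log r|)) ≤ k ^ (p - 1) := by
      rw [hkp]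
      exact div_le_div₀ (by positivity) hnum (by positivity)
        (mul_le_mul_of_nonneg_left hLub (le_of_lt hc₂))
    have hBeq : c₁ / 2 * ((2:ℝ) ^ (-β) * r ^ (-β)) / (c₂ * (1 + |Real.log r|))
        = D * r ^ (-β) / (1 + |Real.log r|) := by
      rw [hD]; field_simp
    rw [hBeq] at hB
    -- take (p-1)⁻¹ powers
    have hmain : D ^ (p - 1)⁻¹ * r ^ (-β / (p - 1)) / (1 + |Real.log r|) ^ (1 / (p - 1)) ≤ k := by
      have h5 := Real.rpow_le_rpow (by positivity) hB (by positivity : (0:ℝ) ≤ (p-1)⁻¹)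
      rw [Real.rpow_rpow_inv (by linarith) hqne] at h5
      have h6 : (D * r ^ (-β) / (1 + |Real.log r|)) ^ (p - 1)⁻¹
          = D ^ (p - 1)⁻¹ * r ^ (-β / (p - 1)) / (1 + |Real.log r|) ^ (1 / (p - 1)) := by
        rw [Real.div_rpow (by positivity) (le_of_lt h1r),
          Real.mul_rpow (le_of_lt hDpos) (Real.rpow_nonneg (le_of_lt hr0) _),
          ← Real.rpow_mul (le_of_lt hr0), one_div]
        ring_nf
      rw [h6] at h5
      exact h5
    have hgoal1 : k ≥ D ^ (p - 1)⁻¹ * r ^ (-β / (p - 1)) / (1 + |Real.log r|) ^ (1 / (p - 1)) :=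
      hmain
    refine ⟨hgoal1, ?_⟩
    -- second goal
    rw [hexp]
    have hrβ : 0 < r ^ (-β) := Real.rpow_pos_of_pos hr0 _
    have := mul_le_mul_of_nonneg_left hmain (by positivity : (0:ℝ) ≤ c₁ / 2 * r ^ (-β))
    calc c₁ / 2 * D ^ (p - 1)⁻¹ * r ^ (-(p * β) / (p - 1)) / (1 + |Real.log r|) ^ (1 / (p - 1))
        = c₁ / 2 * r ^ (-β) *
          (D ^ (p - 1)⁻¹ * r ^ (-β / (p - 1)) / (1 + |Real.log r|) ^ (1 / (p - 1))) := by
          rw [show -(p * β) / (p - 1) = -β / (p - 1) + (-β) by field_simp; ring,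
            Real.rpow_add hr0]
          ring
      _ ≤ c₁ / 2 * r ^ (-β) * k := this
      _ = c₁ / 2 * k * r ^ (-β) := by ring
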